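/- Let {P_n} be a monic polynomial sequence with dual sequence {u_n}, and let J be a lowering operator of order k (i.e. J annihilates polynomials of degree < k and deg J(x^{n+k}) = n with nonzero normalization constants λ_{n+k}^{[k]}). Define the normalized image sequence P̃_n(x) = (λ_{n+k}^{[k]})^{−1} J(P_{n+k}(x)), which is a monic polynomial sequence, and let {ũ_n} be its dual sequence. Then ᵗJ(ũ_n) = λ_{n+k}^{[k]} u_{n+k} for all n ≥ 0. -/

import Mathlib

open Polynomial

noncomputable def pmulForm (w : Polynomial ℂ) (u : Module.Dual ℂ (Polynomial ℂ)) :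
    Module.Dual ℂ (Polynomial ℂ) :=
  u ∘ₗ (LinearMap.mulLeft ℂ w)

noncomputable def formD (u : Module.Dual ℂ (Polynomial ℂ)) :
    Module.Dual ℂ (Polynomial ℂ) :=
  -(u ∘ₗ (Polynomial.derivative : Polynomial ℂ →ₗ[ℂ] Polynomial ℂ))

/-!
Both `f ↦ ũ_n (J f)` and `λ_{n+k} u_{n+k}` are linear forms on `ℂ[X]`, so it suffices to compare
them on the basis `{P_m}`. For `m < k` both vanish, since `J` kills polynomials of degree `< k`;
for `m = m' + k` we have `J P_m = λ_{m'} P̃_{m'}`, and both sides equal `λ_n δ_{n,m'}` by duality.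
-/

namespace Polynomial

variable {K : Type*} [Field K]

noncomputable def diffOpTrunc (a : ℕ → K[X]) (N : ℕ) : K[X] →ₗ[K] K[X] :=
  ∑ ν ∈ Finset.range N, (Nat.factorial ν : K)⁻¹ • (LinearMap.mulLeft K (a ν) ∘ₗ derivative ^ ν)

theorem diffOpTrunc_apply (a : ℕ → K[X]) (N : ℕ) (p : K[X]) :
    diffOpTrunc a N p =
      ∑ ν ∈ Finset.range N, (Nat.factorial ν : K)⁻¹ • (a ν * derivative^[ν] p) := by
  simp [diffOpTrunc, Module.End.pow_apply]

theorem diffOpTrunc_apply_of_natDegree_lt (a : ℕ → K[X]) {N : ℕ} {p : K[X]}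
    (hp : p.natDegree < N) : diffOpTrunc a N p = diffOpTrunc a (p.natDegree + 1) p := by
  rw [diffOpTrunc_apply, diffOpTrunc_apply]
  refine (Finset.sum_subset (Finset.range_subset_range.2 hp) fun ν _ hν => ?_).symm
  rw [Finset.mem_range, not_lt] at hν
  rw [iterate_derivative_eq_zero (Nat.lt_of_succ_le hν), mul_zero, smul_zero]

/-- The operator `J = ∑_ν (a_ν / ν!) D^ν`; on `p` only the terms with `ν ≤ deg p` are nonzero. -/
noncomputable def diffOp (a : ℕ → K[X]) : K[X] →ₗ[K] K[X] where
  toFun p := diffOpTrunc a (p.natDegree + 1) p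
  map_add' p q := by
    have hp : p.natDegree < max p.natDegree q.natDegree + 1 := by omega
    have hq : q.natDegree < max p.natDegree q.natDegree + 1 := by omega
    have hpq : (p + q).natDegree < max p.natDegree q.natDegree + 1 :=
      (natDegree_add_le p q).trans_lt (Nat.lt_succ_self _)
    rw [← diffOpTrunc_apply_of_natDegree_lt a hp, ← diffOpTrunc_apply_of_natDegree_lt a hq,
      ← diffOpTrunc_apply_of_natDegree_lt a hpq, map_add]
  map_smul' c p := by
    have hcp : (c • p).natDegree < p.natDegree + 1 :=
      (natDegree_smul_le c p).trans_lt (Nat.lt_succ_self _)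
    rw [RingHom.id_apply, ← diffOpTrunc_apply_of_natDegree_lt a hcp, map_smul]

theorem diffOp_apply (a : ℕ → K[X]) (p : K[X]) :
    diffOp a p = ∑ ν ∈ Finset.range (p.natDegree + 1),
      (Nat.factorial ν : K)⁻¹ • (a ν * derivative^[ν] p) :=
  diffOpTrunc_apply a _ p

theorem diffOp_apply_eq_zero_of_natDegree_lt {a : ℕ → K[X]} {k : ℕ} (ha : ∀ ν < k, a ν = 0)
    {p : K[X]} (hp : p.natDegree < k) : diffOp a p = 0 := by
  rw [diffOp_apply]
  refine Finset.sum_eq_zero fun ν hν => ?_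
  rw [ha ν (by rw [Finset.mem_range] at hν; omega), zero_mul, smul_zero]

theorem span_range_eq_top_of_monic {R : Type*} [CommRing R] [Nontrivial R]
    {P : ℕ → R[X]} (hmonic : ∀ n, (P n).Monic) (hdeg : ∀ n, (P n).natDegree = n) :
    Submodule.span R (Set.range P) = ⊤ :=
  Sequence.span ⟨P, fun n => by rw [degree_eq_natDegree (hmonic n).ne_zero, hdeg]⟩
    fun n => by simp [(hmonic n).leadingCoeff]

end Polynomial

theorem stmt11_general (k : ℕ) (a : ℕ → Polynomial ℂ)
    (J : Polynomial ℂ → Polynomial ℂ)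
    (hJ : ∀ p, J p = ∑ ν ∈ Finset.range (p.natDegree + 1),
        ((Nat.factorial ν : ℂ))⁻¹ • (a ν * Polynomial.derivative^[ν] p))
    (ha : ∀ ν < k, a ν = 0)
    (lam : ℕ → ℂ)
    (hlamne : ∀ n, lam n ≠ 0)
    (P : ℕ → Polynomial ℂ) (hmonic : ∀ n, (P n).Monic) (hdeg : ∀ n, (P n).natDegree = n)
    (u : ℕ → Module.Dual ℂ (Polynomial ℂ))
    (hdual : ∀ n m, u n (P m) = if n = m then 1 else 0)
    (Pt : ℕ → Polynomial ℂ) (hPt : ∀ n, Pt n = (lam n)⁻¹ • J (P (n + k)))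
    (ut : ℕ → Module.Dual ℂ (Polynomial ℂ))
    (hdualt : ∀ n m, ut n (Pt m) = if n = m then 1 else 0) :
    ∀ n, ∀ f : Polynomial ℂ, ut n (J f) = lam n * u (n + k) f := by
  obtain rfl : J = diffOp a := funext fun p => (hJ p).trans (diffOp_apply a p).symm
  intro n f
  suffices ut n ∘ₗ diffOp a = lam n • u (n + k) from LinearMap.congr_fun this f
  refine LinearMap.ext_on_range (span_range_eq_top_of_monic hmonic hdeg) fun m => ?_
  simp only [LinearMap.comp_apply, LinearMap.smul_apply, smul_eq_mul]
  obtain hm | ⟨m, rfl⟩ : m < k ∨ ∃ m', m = m' + k :=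
    (lt_or_ge m k).imp_right fun h => ⟨m - k, by omega⟩
  · rw [diffOp_apply_eq_zero_of_natDegree_lt ha (by rwa [hdeg]), map_zero, hdual,
      if_neg (by omega), mul_zero]
  · have hJP : diffOp a (P (m + k)) = lam m • Pt m := by
      rw [hPt, smul_smul, mul_inv_cancel₀ (hlamne m), one_smul]
    rw [hJP, map_smul, hdualt, hdual, smul_eq_mul]
    by_cases hnm : n = m
    · simp [hnm]
    · rw [if_neg hnm, if_neg (by omega), mul_zero, mul_zero]

/-- For a lowering operator `J` of order `k`, the dual sequence `{ũ_n}` of the normalized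
image MPS `P̃_n = (λ_{n+k}^{[k]})⁻¹ J(P_{n+k})` satisfies `ᵗJ(ũ_n) = λ_{n+k}^{[k]} u_{n+k}`. -/
theorem stmt11 (k : ℕ) (a : ℕ → Polynomial ℂ)
    (J : Polynomial ℂ → Polynomial ℂ)
    (hJ : ∀ p, J p = ∑ ν ∈ Finset.range (p.natDegree + 1),
        ((Nat.factorial ν : ℂ))⁻¹ • (a ν * Polynomial.derivative^[ν] p))
    (ha : ∀ ν < k, a ν = 0)
    (hadeg : ∀ ν, k ≤ ν → (a ν).degree ≤ ((ν - k : ℕ) : ℕ))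
    (lam : ℕ → ℂ)
    (hlam : ∀ n, lam n = ∑ ν ∈ Finset.range (n + 1),
        ((n + k).choose (n + k - ν) : ℂ) * (a (n + k - ν)).coeff (n - ν))
    (hlamne : ∀ n, lam n ≠ 0)
    (P : ℕ → Polynomial ℂ) (hmonic : ∀ n, (P n).Monic) (hdeg : ∀ n, (P n).natDegree = n)
    (u : ℕ → Module.Dual ℂ (Polynomial ℂ))
    (hdual : ∀ n m, u n (P m) = if n = m then 1 else 0)
    (Pt : ℕ → Polynomial ℂ) (hPt : ∀ n, Pt n = (lam n)⁻¹ • J (P (n + k)))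
    (ut : ℕ → Module.Dual ℂ (Polynomial ℂ))
    (hdualt : ∀ n m, ut n (Pt m) = if n = m then 1 else 0) :
    ∀ n, ∀ f : Polynomial ℂ, ut n (J f) = lam n * u (n + k) f :=
  stmt11_general k a J hJ ha lam hlamne P hmonic hdeg u hdual Pt hPt ut hdualt
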